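/- arXiv:2604.27735 — 2 statements merged into one kernel-verified Lean document; each statement's English description precedes it below -/
import Mathlib

section
/- Let N ≥ 0 and let p be a real polynomial of degree at most N. If there exist N+1 pairwise disjoint nondegenerate closed intervals [a_0,b_0], ..., [a_N,b_N] ⊂ ℝ (with a_m < b_m for each m) such that the integral of p over each interval [a_m,b_m] is zero, then p is the zero polynomial. -/
open Polynomial intervalIntegral

/-- A real polynomial of degree at most N whose integral vanishes over N+1
pairwise disjoint nondegenerate closed intervals is the zero polynomial. -/
theorem poly_vanishing_averages_eq_zero (N : ℕ) (p : Polynomial ℝ)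
    (hdeg : p.degree ≤ N)
    (a b : Fin (N + 1) → ℝ) (hab : ∀ m, a m < b m)
    (hdisj : ∀ m m' : Fin (N + 1), m ≠ m' →
      Disjoint (Set.Icc (a m) (b m)) (Set.Icc (a m') (b m')))
    (hint : ∀ m, ∫ x in (a m)..(b m), p.eval x = 0) :
    p = 0 := by
  have hc : Continuous fun x : ℝ => p.eval x := p.continuous
  -- for each m, find a root of p in the open interval
  have hroot : ∀ m, ∃ c ∈ Set.Ioo (a m) (b m), p.eval c = 0 := by
    intro m
    set F : ℝ → ℝ := fun x => ∫ t in (a m)..x, p.eval t with hF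
    have hF' : ∀ x : ℝ, HasDerivAt F (p.eval x) x := fun x =>
      intervalIntegral.integral_hasDerivAt_right (hc.intervalIntegrable _ _)
        (hc.stronglyMeasurableAtFilter _ _) hc.continuousAt
    have hFc : ContinuousOn F (Set.Icc (a m) (b m)) :=
      fun x _ => (hF' x).continuousAt.continuousWithinAt
    have hFab : F (a m) = F (b m) := by
      simp [hF, intervalIntegral.integral_same, hint m]
    exact exists_hasDerivAt_eq_zero (hab m) hFc hFab (fun x _ => hF' x)
  choose r hr hr0 using hroot
  have hinj : Function.Injective r := by
    intro m m' h
    by_contra hne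
    exact (hdisj m m' hne).ne_of_mem (Set.mem_Icc_of_Ioo (hr m))
      (Set.mem_Icc_of_Ioo (hr m')) (by rw [h])
  exact Polynomial.eq_zero_of_natDegree_lt_card_of_eval_eq_zero p hinj hr0
    (by
      have h1 : p.natDegree ≤ N := Polynomial.natDegree_le_iff_degree_le.mpr hdeg
      simpa using Nat.lt_succ_of_le h1)
end

section
/- Let β ∈ [1,2] and let u_{k−1}, u_k, u_{k+1} be real numbers. Set Δ₋ = u_k − u_{k−1}, Δ₊ = u_{k+1} − u_k, and let the limited slope be σ = minmod(β Δ₋, (Δ₋ + Δ₊)/2, β Δ₊). Then both reconstructed interface values u_k − σ/2 and u_k + σ/2 lie in the interval [min(u_{k−1}, u_k, u_{k+1}), max(u_{k−1}, u_k, u_{k+1})]. -/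
/-- The minmod function of three real arguments: the minimum if all are
positive, the maximum if all are negative, and zero otherwise. -/
noncomputable def minmod3 (a b c : ℝ) : ℝ :=
  if 0 < a ∧ 0 < b ∧ 0 < c then min a (min b c)
  else if a < 0 ∧ b < 0 ∧ c < 0 then max a (max b c)
  else 0

/-- Local boundedness of the generalized-minmod limited linear reconstruction:
both reconstructed interface values u_k ± σ/2 lie between the minimum and the
maximum of the three neighboring cell means. -/
theorem minmod_reconstruction_bounded (β : ℝ) (hβ : β ∈ Set.Icc (1 : ℝ) 2)
    (uL uC uR : ℝ) :
    uC - minmod3 (β * (uC - uL)) (((uC - uL) + (uR - uC)) / 2) (β * (uR - uC)) / 2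
      ∈ Set.Icc (min uL (min uC uR)) (max uL (max uC uR)) ∧
    uC + minmod3 (β * (uC - uL)) (((uC - uL) + (uR - uC)) / 2) (β * (uR - uC)) / 2
      ∈ Set.Icc (min uL (min uC uR)) (max uL (max uC uR)) := by
  obtain ⟨hβ1, hβ2⟩ := hβ
  have hminL : min uL (min uC uR) ≤ uL := min_le_left _ _
  have hminC : min uL (min uC uR) ≤ uC := le_trans (min_le_right _ _) (min_le_left _ _)
  have hminR : min uL (min uC uR) ≤ uR := le_trans (min_le_right _ _) (min_le_right _ _)
  have hmaxL : uL ≤ max uL (max uC uR) := le_max_left _ _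
  have hmaxC : uC ≤ max uL (max uC uR) := le_trans (le_max_left _ _) (le_max_right _ _)
  have hmaxR : uR ≤ max uL (max uC uR) := le_trans (le_max_right _ _) (le_max_right _ _)
  unfold minmod3
  split_ifs with h1 h2
  · obtain ⟨ha, hb, hc⟩ := h1
    set σ := min (β * (uC - uL)) (min (((uC - uL) + (uR - uC)) / 2) (β * (uR - uC))) with hσ
    have hσa : σ ≤ β * (uC - uL) := min_le_left _ _
    have hσc : σ ≤ β * (uR - uC) := le_trans (min_le_right _ _) (min_le_right _ _)
    have hσpos : 0 < σ := lt_min ha (lt_min hb hc)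
    have hLC : 0 < uC - uL := by nlinarith
    have hCR : 0 < uR - uC := by nlinarith
    constructor <;> constructor
    · nlinarith
    · nlinarith
    · nlinarith
    · nlinarith
  · obtain ⟨ha, hb, hc⟩ := h2
    set σ := max (β * (uC - uL)) (max (((uC - uL) + (uR - uC)) / 2) (β * (uR - uC))) with hσ
    have hσa : β * (uC - uL) ≤ σ := le_max_left _ _
    have hσc : β * (uR - uC) ≤ σ := le_trans (le_max_right _ _) (le_max_right _ _)
    have hσneg : σ < 0 := max_lt ha (max_lt hb hc)
    have hLC : uC - uL < 0 := by nlinarith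
    have hCR : uR - uC < 0 := by nlinarith
    constructor <;> constructor
    · nlinarith
    · nlinarith
    · nlinarith
    · nlinarith
  · constructor <;> constructor <;> simp [hminC, hmaxC]
end
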